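/- arXiv:0806.1173 — 2 statements merged into one kernel-verified Lean document; each statement's English description precedes it below -/
import Mathlib

section
/- For every positive integer x and u ∈ (0,1), |E(η_x) − x/(1+u)| ≤ 2u/(1+u)² ≤ 1/2. -/
/-!
Write `q y n = P(σ_y = n)`. Conditioning on the last step gives
`q (y+1) (n+2) = (1-u) q y (n+1) + u q y n`, so `T n = ∑_y q y n` and `S n = ∑_y y q y n` satisfy
linear recurrences with characteristic roots `1` and `-u`, which yields their closed forms.
Since the steps are at least `1` almost surely, the events `{σ_z = x}` are almost surely disjoint,
so `P(H_x) = T x` and `E η_x = S x / T x`. With `w = (-u)^(x+1)` one finds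
`E η_x - x/(1+u) = (1-u)(u + w(1 + x(1+u))) / ((1+u)²(1-w))`, and the bound reduces to
`uˣ (1 + x(1-u)) ≤ 1`.
-/

open MeasureTheory ProbabilityTheory Finset

lemma pow_mul_one_add_mul_sub_le_one {u : ℝ} (hu : 0 ≤ u) (n : ℕ) :
    u ^ n * (1 + n * (1 - u)) ≤ 1 := by
  induction n with
  | zero => simp
  | succ n ih =>
    have hstep : u * (1 + (n + 1) * (1 - u)) ≤ 1 + n * (1 - u) := by
      nlinarith [mul_nonneg (by positivity : (0 : ℝ) ≤ n + 1) (mul_self_nonneg (1 - u))]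
    calc u ^ (n + 1) * (1 + ((n + 1 : ℕ) : ℝ) * (1 - u))
        = u ^ n * (u * (1 + (n + 1) * (1 - u))) := by push_cast; ring
      _ ≤ u ^ n * (1 + n * (1 - u)) := by gcongr
      _ ≤ 1 := ih

lemma neg_pow_succ_lt_one {u : ℝ} (hu : |u| < 1) (n : ℕ) : (-u) ^ (n + 1) < 1 :=
  (le_abs_self _).trans_lt <| by
    rw [abs_pow, abs_neg]; exact pow_lt_one₀ (abs_nonneg u) hu n.succ_ne_zero

lemma one_sub_mul_abs_add_neg_pow_le {u : ℝ} (hu0 : 0 < u) (hu1 : u < 1) (n : ℕ) :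
    (1 - u) * |u + (-u) ^ (n + 1) * (1 + n * (1 + u))| ≤ 2 * u * (1 - (-u) ^ (n + 1)) := by
  have habs : |(-u) ^ (n + 1)| = u ^ n * u := by rw [abs_pow, abs_neg, abs_of_pos hu0, pow_succ]
  have hc : 0 ≤ 1 + n * (1 + u) := by positivity
  have hkey := pow_mul_one_add_mul_sub_le_one hu0.le n
  have htri : |u + (-u) ^ (n + 1) * (1 + n * (1 + u))| ≤ u + u ^ n * u * (1 + n * (1 + u)) :=
    calc _ ≤ |u| + |(-u) ^ (n + 1) * (1 + n * (1 + u))| := abs_add_le _ _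
      _ = _ := by rw [abs_mul, habs, abs_of_pos hu0, abs_of_nonneg hc]
  calc (1 - u) * |u + (-u) ^ (n + 1) * (1 + n * (1 + u))|
      ≤ (1 - u) * (u + u ^ n * u * (1 + n * (1 + u))) :=
        mul_le_mul_of_nonneg_left htri (by linarith)
    -- the gap between the two sides is u(1+u)(1 - uⁿ(1 + n(1-u)))
    _ ≤ 2 * u * (1 - |(-u) ^ (n + 1)|) := by
        rw [habs]
        nlinarith [mul_le_mul_of_nonneg_left hkey (by positivity : 0 ≤ u * (1 + u))]
    _ ≤ 2 * u * (1 - (-u) ^ (n + 1)) := by gcongr; exact le_abs_self _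

/-- The recursion and boundary values characterising `q y n = P(σ_y = n)` for the walk with steps
`1` (probability `1 - u`) and `2` (probability `u`). -/
structure IsWalkLaw (u : ℝ) (q : ℕ → ℕ → ℝ) : Prop where
  zero_zero : q 0 0 = 1
  zero_succ (n : ℕ) : q 0 (n + 1) = 0
  one_one : q 1 1 = 1 - u
  eq_zero_of_lt {y n : ℕ} : n < y → q y n = 0
  succ_add_two (y n : ℕ) : q (y + 1) (n + 2) = (1 - u) * q y (n + 1) + u * q y n

-- For the walk law, `hitMass q n = P(H_n)` (for `n = 0` the visit at time `0` counts) and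
-- `hitMoment q n / hitMass q n = E η_n`.
def hitMass (q : ℕ → ℕ → ℝ) (n : ℕ) : ℝ := ∑ y ∈ range (n + 1), q y n

def hitMoment (q : ℕ → ℕ → ℝ) (n : ℕ) : ℝ := ∑ y ∈ range (n + 1), (y : ℝ) * q y n

namespace IsWalkLaw

variable {u : ℝ} {q : ℕ → ℕ → ℝ}

lemma sum_range_mul_add_two (hq : IsWalkLaw u q) (f : ℕ → ℝ) (n : ℕ) :
    ∑ y ∈ range (n + 3), f y * q y (n + 2) =
      (1 - u) * ∑ y ∈ range (n + 2), f (y + 1) * q y (n + 1)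
        + u * ∑ y ∈ range (n + 1), f (y + 1) * q y n := by
  have hlast := sum_range_succ (fun y => f (y + 1) * q y n) (n + 1)
  rw [hq.eq_zero_of_lt (Nat.lt_succ_self n), mul_zero, add_zero] at hlast
  rw [sum_range_succ', hq.zero_succ, mul_zero, add_zero, ← hlast, mul_sum, mul_sum,
    ← sum_add_distrib]
  exact sum_congr rfl fun y _ => by rw [hq.succ_add_two]; ring

lemma hitMass_add_two (hq : IsWalkLaw u q) (n : ℕ) :
    hitMass q (n + 2) = (1 - u) * hitMass q (n + 1) + u * hitMass q n := by
  simpa only [hitMass, one_mul] using hq.sum_range_mul_add_two (fun _ => 1) n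

lemma hitMoment_add_two (hq : IsWalkLaw u q) (n : ℕ) :
    hitMoment q (n + 2) =
      (1 - u) * hitMoment q (n + 1) + u * hitMoment q n + hitMass q (n + 2) := by
  have h := hq.sum_range_mul_add_two (fun y => (y : ℝ)) n
  simp only [Nat.cast_add, Nat.cast_one, add_mul, one_mul, sum_add_distrib] at h
  rw [hitMoment, h, hq.hitMass_add_two, hitMass, hitMass, hitMoment, hitMoment]
  ring

lemma hitMass_eq (hq : IsWalkLaw u q) (hu : 1 + u ≠ 0) (n : ℕ) :
    hitMass q n = (1 - (-u) ^ (n + 1)) / (1 + u) := by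
  induction n using Nat.twoStepInduction with
  | zero => simp [hitMass, hq.zero_zero, hu]
  | one =>
    simp only [hitMass, sum_range_succ, sum_range_zero, hq.zero_succ, hq.one_one]
    field_simp
    ring
  | more n ih0 ih1 =>
    rw [hq.hitMass_add_two, ih0, ih1]
    field_simp
    ring

lemma hitMoment_eq (hq : IsWalkLaw u q) (hu : 1 + u ≠ 0) (n : ℕ) :
    hitMoment q n =
      ((n + 1) * (1 + (-u) ^ (n + 2)) * (1 + u) - (1 + u ^ 2) * (1 - (-u) ^ (n + 1)))
        / (1 + u) ^ 3 := by
  induction n using Nat.twoStepInduction with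
  | zero => simp [hitMoment]
  | one =>
    simp only [hitMoment, sum_range_succ, sum_range_zero, hq.one_one]
    field_simp
    ring
  | more n ih0 ih1 =>
    rw [hq.hitMoment_add_two, ih0, ih1, hq.hitMass_eq hu]
    push_cast
    field_simp
    ring

lemma hitMoment_div_hitMass_sub (hq : IsWalkLaw u q) (hu0 : 0 < u) (hu1 : u < 1) (n : ℕ) :
    hitMoment q n / hitMass q n - n / (1 + u) =
      (1 - u) * (u + (-u) ^ (n + 1) * (1 + n * (1 + u)))
        / ((1 + u) ^ 2 * (1 - (-u) ^ (n + 1))) := by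
  have hu : 1 + u ≠ 0 := by positivity
  have hw : 1 - (-u) ^ (n + 1) ≠ 0 :=
    (sub_pos.2 (neg_pow_succ_lt_one (abs_lt.2 ⟨by linarith, hu1⟩) n)).ne'
  rw [hq.hitMoment_eq hu, hq.hitMass_eq hu, pow_succ (-u) (n + 1)]
  field_simp
  ring

lemma abs_hitMoment_div_hitMass_sub_le (hq : IsWalkLaw u q) (hu0 : 0 < u) (hu1 : u < 1)
    (n : ℕ) : |hitMoment q n / hitMass q n - n / (1 + u)| ≤ 2 * u / (1 + u) ^ 2 := by
  have hbound := one_sub_mul_abs_add_neg_pow_le hu0 hu1 n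
  have hw : 0 < 1 - (-u) ^ (n + 1) :=
    sub_pos.2 (neg_pow_succ_lt_one (abs_lt.2 ⟨by linarith, hu1⟩) n)
  rw [hq.hitMoment_div_hitMass_sub hu0 hu1, abs_div,
    abs_of_pos (by positivity : 0 < (1 + u) ^ 2 * _), abs_mul, abs_of_pos (by linarith : 0 < 1 - u),
    div_le_div_iff₀ (by positivity) (by positivity)]
  nlinarith [mul_le_mul_of_nonneg_right hbound (by positivity : (0 : ℝ) ≤ (1 + u) ^ 2)]

lemma tsum_mul_div (hq : IsWalkLaw u q) (c : ℝ) (n : ℕ) :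
    ∑' y : ℕ, (y : ℝ) * (q y n / c) = hitMoment q n / c := by
  rw [tsum_eq_sum (s := range (n + 1)) fun y hy => by
    rw [hq.eq_zero_of_lt (by simpa using hy), zero_div, mul_zero], hitMoment, sum_div]
  simp only [mul_div_assoc]

end IsWalkLaw

def walk {Ω : Type*} (ε : ℕ → Ω → ℕ) (y : ℕ) (ω : Ω) : ℕ := ∑ k ∈ range y, ε k ω

section Walk

variable {Ω : Type*} {ε : ℕ → Ω → ℕ}

@[simp] lemma walk_zero (ω : Ω) : walk ε 0 ω = 0 := sum_range_zero _

lemma walk_succ (y : ℕ) (ω : Ω) : walk ε (y + 1) ω = walk ε y ω + ε y ω := sum_range_succ _ _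

lemma walk_one (ω : Ω) : walk ε 1 ω = ε 0 ω := by simp [walk_succ]

lemma strictMono_walk {ω : Ω} (h : ∀ k, 1 ≤ ε k ω) : StrictMono (walk ε · ω) :=
  strictMono_nat_of_lt_succ fun y => by rw [walk_succ]; have := h y; omega

variable [MeasurableSpace Ω] {P : Measure Ω}

lemma measurable_walk (hmeas : ∀ k, Measurable (ε k)) (y : ℕ) : Measurable (walk ε y) :=
  Finset.measurable_sum _ fun k _ => hmeas k

lemma measure_walk_inter_step_eq_mul (hmeas : ∀ k, Measurable (ε k)) (hindep : iIndepFun ε P)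
    (y a c : ℕ) :
    P ({ω | walk ε y ω = a} ∩ {ω | ε y ω = c}) = P {ω | walk ε y ω = a} * P {ω | ε y ω = c} := by
  have hind := hindep.indepFun_finsetSum_of_notMem hmeas (notMem_range_self (n := y))
  have hwalk : ∑ k ∈ range y, ε k = walk ε y := by ext ω; simp [walk, Finset.sum_apply]
  rw [hwalk] at hind
  exact hind.measure_inter_preimage_eq_mul _ _ (measurableSet_singleton a)
    (measurableSet_singleton c)

lemma ae_step_eq_one_or_two [IsProbabilityMeasure P] (hmeas : ∀ k, Measurable (ε k))
    (h : ∀ k, P {ω | ε k ω = 1} + P {ω | ε k ω = 2} = 1) :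
    ∀ᵐ ω ∂P, ∀ k, ε k ω = 1 ∨ ε k ω = 2 := by
  refine ae_all_iff.2 fun k => ?_
  have hone : MeasurableSet {ω | ε k ω = 1} := hmeas k (measurableSet_singleton 1)
  have htwo : MeasurableSet {ω | ε k ω = 2} := hmeas k (measurableSet_singleton 2)
  have hdisj : Disjoint {ω | ε k ω = 1} {ω | ε k ω = 2} :=
    Set.disjoint_left.2 fun ω h1 h2 => by simp only [Set.mem_ofPred_eq] at h1 h2; omega
  rw [Filter.Eventually, Set.ofPred_or, mem_ae_iff, prob_compl_eq_zero_iff (hone.union htwo),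
    measure_union hdisj htwo, h k]

lemma ae_strictMono_walk (hgood : ∀ᵐ ω ∂P, ∀ k, ε k ω = 1 ∨ ε k ω = 2) :
    ∀ᵐ ω ∂P, StrictMono (walk ε · ω) :=
  hgood.mono fun ω hω => strictMono_walk fun k => by rcases hω k with h | h <;> omega

lemma measure_walk_eq_of_lt (hgood : ∀ᵐ ω ∂P, ∀ k, ε k ω = 1 ∨ ε k ω = 2) {y n : ℕ} (h : n < y) :
    P {ω | walk ε y ω = n} = 0 :=
  measure_eq_zero_iff_ae_notMem.2 <| (ae_strictMono_walk hgood).mono fun ω hω hn => by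
    have := hω.le_apply (x := y)
    simp only [Set.mem_ofPred_eq] at hn
    omega

lemma measure_walk_succ_eq_add_two (hgood : ∀ᵐ ω ∂P, ∀ k, ε k ω = 1 ∨ ε k ω = 2)
    (hmeas : ∀ k, Measurable (ε k)) (hindep : iIndepFun ε P)
    (y n : ℕ) :
    P {ω | walk ε (y + 1) ω = n + 2} =
      P {ω | walk ε y ω = n + 1} * P {ω | ε y ω = 1}
        + P {ω | walk ε y ω = n} * P {ω | ε y ω = 2} := by
  rw [← measure_walk_inter_step_eq_mul hmeas hindep,
    ← measure_walk_inter_step_eq_mul hmeas hindep, ← measure_union]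
  · refine measure_congr (Filter.eventuallyEq_set.2 (hgood.mono fun ω hω => ?_))
    simp only [Set.mem_ofPred_eq, Set.mem_union, Set.mem_inter_iff, walk_succ]
    rcases hω y with h | h <;> rw [h] <;> omega
  · exact Set.disjoint_left.2 fun ω h1 h2 => by
      simp only [Set.mem_ofPred_eq, Set.mem_inter_iff] at h1 h2; omega
  · exact (measurable_walk hmeas y (measurableSet_singleton n)).inter
      (hmeas y (measurableSet_singleton 2))

lemma measure_exists_walk_eq (hgood : ∀ᵐ ω ∂P, ∀ k, ε k ω = 1 ∨ ε k ω = 2)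
    (hmeas : ∀ k, Measurable (ε k)) {x : ℕ} (hx : 1 ≤ x) :
    P {ω | ∃ z, 1 ≤ z ∧ walk ε z ω = x} = ∑ z ∈ range (x + 1), P {ω | walk ε z ω = x} := by
  have hmono := ae_strictMono_walk hgood
  calc P {ω | ∃ z, 1 ≤ z ∧ walk ε z ω = x}
      = P (⋃ z ∈ range (x + 1), {ω | walk ε z ω = x}) := by
        refine measure_congr (Filter.eventuallyEq_set.2 (hmono.mono fun ω hω => ?_))
        simp only [Set.mem_ofPred_eq, Set.mem_iUnion, mem_range, exists_prop]
        constructor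
        · rintro ⟨z, -, hz⟩
          exact ⟨z, by have := hω.le_apply (x := z); omega, hz⟩
        · rintro ⟨z, -, hz⟩
          exact ⟨z, Nat.one_le_iff_ne_zero.2 (by rintro rfl; simp at hz; omega), hz⟩
    _ = ∑ z ∈ range (x + 1), P {ω | walk ε z ω = x} :=
        measure_biUnion_finset₀
          (fun z _ z' _ hne => measure_eq_zero_iff_ae_notMem.2 <| hmono.mono
            fun ω hω ⟨h, h'⟩ => hne (hω.injective (h.trans h'.symm)))
          fun z _ => (measurable_walk hmeas z (measurableSet_singleton x)).nullMeasurableSet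

lemma isWalkLaw_walk [IsProbabilityMeasure P] (hgood : ∀ᵐ ω ∂P, ∀ k, ε k ω = 1 ∨ ε k ω = 2)
    {u : ℝ} (hu0 : 0 ≤ u) (hu1 : u ≤ 1)
    (hmeas : ∀ k, Measurable (ε k)) (hindep : iIndepFun ε P)
    (h1 : ∀ k, P {ω | ε k ω = 1} = ENNReal.ofReal (1 - u))
    (h2 : ∀ k, P {ω | ε k ω = 2} = ENNReal.ofReal u) :
    IsWalkLaw u fun y n => (P {ω | walk ε y ω = n}).toReal where
  zero_zero := by simp
  zero_succ n := by simp
  one_one := by simp only [walk_one, h1 0]; exact ENNReal.toReal_ofReal (by linarith)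
  eq_zero_of_lt h := by simp [measure_walk_eq_of_lt hgood h]
  succ_add_two y n := by
    rw [measure_walk_succ_eq_add_two hgood hmeas hindep, h1, h2,
      ENNReal.toReal_add (by finiteness) (by finiteness), ENNReal.toReal_mul, ENNReal.toReal_mul,
      ENNReal.toReal_ofReal hu0, ENNReal.toReal_ofReal (by linarith)]
    ring

end Walk

theorem conditional_hitting_time_expectation_bounds
    (Ω : Type*) [MeasurableSpace Ω] (P : Measure Ω) [IsProbabilityMeasure P]
    (u : ℝ) (hu : u ∈ Set.Ioo (0 : ℝ) 1)
    (ε : ℕ → Ω → ℕ) (hmeas : ∀ k, Measurable (ε k))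
    (hindep : iIndepFun ε P)
    (h1 : ∀ k, P {ω | ε k ω = 1} = ENNReal.ofReal (1 - u))
    (h2 : ∀ k, P {ω | ε k ω = 2} = ENNReal.ofReal u)
    (σ : ℕ → Ω → ℕ) (hσ : ∀ y ω, σ y ω = ∑ k ∈ Finset.range y, ε k ω)
    (x : ℕ) (hx : 1 ≤ x) :
    |(∑' y : ℕ, (y : ℝ) *
        ((P {ω | σ y ω = x}).toReal / (P {ω | ∃ z, 1 ≤ z ∧ σ z ω = x}).toReal))
      - (x : ℝ) / (1 + u)| ≤ 2 * u / (1 + u) ^ 2 ∧ 2 * u / (1 + u) ^ 2 ≤ 1 / 2 := by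
  obtain ⟨hu0, hu1⟩ := hu
  obtain rfl : σ = walk ε := funext fun y => funext (hσ y)
  have hgood := ae_step_eq_one_or_two hmeas fun k => by
    rw [h1, h2, ← ENNReal.ofReal_add (by linarith) hu0.le, sub_add_cancel, ENNReal.ofReal_one]
  have hq := isWalkLaw_walk hgood hu0.le hu1.le hmeas hindep h1 h2
  have hhit : (P {ω | ∃ z, 1 ≤ z ∧ walk ε z ω = x}).toReal =
      hitMass (fun y n => (P {ω | walk ε y ω = n}).toReal) x := by
    rw [measure_exists_walk_eq hgood hmeas hx, ENNReal.toReal_sum fun _ _ => measure_ne_top _ _]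
    rfl
  refine ⟨?_, ?_⟩
  · rw [hhit, hq.tsum_mul_div]
    exact hq.abs_hitMoment_div_hitMass_sub_le hu0 hu1 x
  · rw [div_le_div_iff₀ (by positivity) two_pos]
    nlinarith [sq_nonneg (1 - u)]
end

section
/- For every λ > 0 and r > 0, the coefficient c_λ(r,x) of z^x in the power series expansion of (1 − 4rz(1+z))^{−λ} satisfies c_λ(r,x) ~ (m(r)^λ/Γ(λ))·x^{λ−1}·γ(r)^{−x} as x → ∞. -/
/-!
Since `4 r γ (1 + γ) = 1`, the substitution `z = γ w` factors `1 - 4 r z (1 + z)` as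
`(1 + q w) (1 - w)` with `q = γ / (1 + γ) < 1`. Hence `c x * γ ^ x` is the Cauchy product of the
coefficients of `(1 - w) ^ (-λ)`, which grow like `x ^ (λ - 1) / Γ(λ)` by Euler's limit formula for
`Γ`, with the geometrically decaying coefficients `b j` of `(1 + q w) ^ (-λ)`. Convolving with such
a sequence only multiplies the asymptotics by `∑ b j = (1 + q) ^ (-λ) = m ^ λ`
(dominated convergence).
-/

open Filter

noncomputable def gam (r : ℝ) : ℝ := (Real.sqrt ((1 + r) / r) - 1) / 2

noncomputable def mfun (r : ℝ) : ℝ := (1 + Real.sqrt (r / (1 + r))) / 2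

open Finset Topology

theorem ascPochhammer_eval_eq_prod_range {R : Type*} [CommSemiring R] (a : R) (n : ℕ) :
    (ascPochhammer R n).eval a = ∏ i ∈ range n, (a + i) := by
  induction n with
  | zero => simp
  | succ n ih => rw [ascPochhammer_succ_eval, ih, prod_range_succ]

noncomputable def negBinomCoeff (a : ℝ) (n : ℕ) : ℝ :=
  (∏ i ∈ range n, (a + i)) / n.factorial

section NegBinomCoeff

variable {a : ℝ}

theorem negBinomCoeff_pos (ha : 0 < a) (n : ℕ) : 0 < negBinomCoeff a n := by
  unfold negBinomCoeff
  have := prod_pos fun i (_ : i ∈ range n) => (by positivity : 0 < a + i)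
  positivity

theorem negBinomCoeff_succ (a : ℝ) (n : ℕ) :
    negBinomCoeff a (n + 1) = negBinomCoeff a n * ((a + n) / (n + 1)) := by
  rw [negBinomCoeff, negBinomCoeff, prod_range_succ, Nat.factorial_succ]
  push_cast
  field_simp

theorem choose_add_sub_one_eq_negBinomCoeff (a : ℝ) (n : ℕ) :
    Ring.choose (a + n - 1) n = negBinomCoeff a n := by
  rw [Ring.choose_eq_smul, Polynomial.descPochhammer_smeval_eq_ascPochhammer,
    Polynomial.ascPochhammer_smeval_eq_eval, negBinomCoeff, ← ascPochhammer_eval_eq_prod_range,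
    smul_eq_mul, div_eq_inv_mul]
  ring_nf

theorem hasSum_negBinomCoeff_mul_pow (a : ℝ) {t : ℝ} (ht : |t| < 1) :
    HasSum (fun n => negBinomCoeff a n * t ^ n) ((1 - t) ^ (-a)) := by
  have := (Real.one_div_one_sub_rpow_hasFPowerSeriesOnBall_zero a).hasSum
    (y := t) (by simpa [enorm_eq_nnnorm, ← NNReal.coe_lt_coe] using ht)
  simp only [FormalMultilinearSeries.ofScalars_apply_eq, smul_eq_mul, zero_add,
    choose_add_sub_one_eq_negBinomCoeff] at this
  rwa [Real.rpow_neg (by linarith [le_abs_self t]), inv_eq_one_div]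

theorem summable_norm_negBinomCoeff_mul_pow (ha : 0 < a) {t : ℝ} (ht : |t| < 1) :
    Summable fun n => ‖negBinomCoeff a n * t ^ n‖ :=
  (hasSum_negBinomCoeff_mul_pow a (t := |t|) (by rwa [abs_abs])).summable.congr fun n => by
    rw [Real.norm_eq_abs, abs_mul, abs_pow, abs_of_pos (negBinomCoeff_pos ha n)]

theorem tendsto_negBinomCoeff_div_rpow (ha : 0 < a) :
    Tendsto (fun n : ℕ => negBinomCoeff a n / (n : ℝ) ^ (a - 1)) atTop
      (𝓝 (Real.Gamma a)⁻¹) := by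
  have h := (tendsto_natCast_div_add_atTop a).div (Real.GammaSeq_tendsto_Gamma a)
    (Real.Gamma_pos_of_pos ha).ne'
  rw [one_div] at h
  refine h.congr' ?_
  filter_upwards [eventually_gt_atTop 0] with n hn
  have hn' : (0 : ℝ) < n := by exact_mod_cast hn
  have hprod := prod_pos fun i (_ : i ∈ range n) => (by positivity : 0 < a + i)
  simp only [Pi.div_apply, Real.GammaSeq]
  rw [prod_range_succ, negBinomCoeff, Real.rpow_sub hn', Real.rpow_one]
  field_simp
  ring

theorem summable_negBinomCoeff_mul_pow_mul_rpow (ha : 0 < a) {t : ℝ} (ht₀ : 0 < t)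
    (ht₁ : t < 1) (s : ℝ) :
    Summable fun j : ℕ => negBinomCoeff a j * t ^ j * ((j : ℝ) + 1) ^ s := by
  refine summable_of_ratio_test_tendsto_lt_one ht₁
    (Eventually.of_forall fun j => by have := negBinomCoeff_pos ha j; positivity) ?_
  have hlim : Tendsto (fun j : ℕ => (a + j) / (1 + j) * t * ((2 + j) / (1 + j) : ℝ) ^ s)
      atTop (𝓝 (1 * t * 1 ^ s)) := by
    have h₁ := tendsto_add_mul_div_add_mul_atTop_nhds a 1 1 one_ne_zero
    have h₂ := tendsto_add_mul_div_add_mul_atTop_nhds (2 : ℝ) 1 1 one_ne_zero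
    simp only [one_mul, div_one] at h₁ h₂
    exact (h₁.mul_const t).mul (h₂.rpow_const (Or.inl one_ne_zero))
  rw [one_mul, Real.one_rpow, mul_one] at hlim
  refine hlim.congr fun j => ?_
  have := negBinomCoeff_pos ha j
  have : 0 < negBinomCoeff a (j + 1) := negBinomCoeff_pos ha _
  rw [Real.norm_of_nonneg (by positivity), Real.norm_of_nonneg (by positivity),
    negBinomCoeff_succ, Real.div_rpow (by positivity) (by positivity)]
  push_cast
  rw [show (j : ℝ) + 1 + 1 = 2 + j by ring, add_comm (j : ℝ) 1]
  have : 0 < ((1 : ℝ) + j) ^ s := by positivity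
  field_simp
  ring

theorem hasSum_negBinomCoeff_convolution {a q w : ℝ} (ha : 0 < a) (hw : |w| < 1)
    (hqw : |q * w| < 1) :
    HasSum (fun x : ℕ =>
        (∑ j ∈ range (x + 1), negBinomCoeff a j * (-q) ^ j * negBinomCoeff a (x - j)) * w ^ x)
      ((1 + q * w) ^ (-a) * (1 - w) ^ (-a)) := by
  have hqw' : |-(q * w)| < 1 := by rwa [abs_neg]
  have h := hasSum_sum_range_mul_of_summable_norm (summable_norm_negBinomCoeff_mul_pow ha hqw')
    (summable_norm_negBinomCoeff_mul_pow ha hw)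
  rw [(hasSum_negBinomCoeff_mul_pow a hqw').tsum_eq, (hasSum_negBinomCoeff_mul_pow a hw).tsum_eq,
    sub_neg_eq_add] at h
  refine h.congr_fun fun x => ?_
  rw [sum_mul]
  refine sum_congr rfl fun j hj => ?_
  rw [← pow_mul_pow_sub w (mem_range_succ_iff.mp hj)]
  ring

end NegBinomCoeff

theorem rpow_le_rpow_abs_of_le_of_inv_le {x M : ℝ} (hx : 0 < x) (hxM : x ≤ M) (hxM' : x⁻¹ ≤ M)
    (α : ℝ) : x ^ α ≤ M ^ |α| := by
  rcases le_or_gt 0 α with hα | hα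
  · rw [abs_of_nonneg hα]
    exact Real.rpow_le_rpow hx.le hxM hα
  · rw [abs_of_neg hα]
    calc x ^ α = x⁻¹ ^ (-α) := by rw [Real.inv_rpow hx.le, Real.rpow_neg hx.le, inv_inv]
      _ ≤ M ^ (-α) := Real.rpow_le_rpow (by positivity) hxM' (by linarith)

section Convolution

variable {α L K : ℝ} {u : ℕ → ℝ}

theorem tendsto_comp_sub_div_rpow (hu : Tendsto (fun n : ℕ => u n / (n : ℝ) ^ α) atTop (𝓝 L))
    (j : ℕ) : Tendsto (fun n : ℕ => u (n - j) / (n : ℝ) ^ α) atTop (𝓝 L) := by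
  have hratio : Tendsto (fun n : ℕ => (((n - j : ℕ) : ℝ) / n) ^ α) atTop (𝓝 1) := by
    have h := (tendsto_natCast_div_add_atTop (j : ℝ)).comp (tendsto_sub_atTop_nat j)
    have h' := h.rpow_const (p := α) (Or.inl one_ne_zero)
    rw [Real.one_rpow] at h'
    refine h'.congr' ?_
    filter_upwards [eventually_ge_atTop j] with n hn
    simp [Nat.cast_sub hn]
  have h := (hu.comp (tendsto_sub_atTop_nat j)).mul hratio
  rw [mul_one] at h
  refine h.congr' ?_
  filter_upwards [eventually_gt_atTop j] with n hn
  have hnj : (0 : ℝ) < ((n - j : ℕ) : ℝ) := by exact_mod_cast Nat.sub_pos_of_lt hn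
  have hn0 : (0 : ℝ) < n := by exact_mod_cast (Nat.zero_le j).trans_lt hn
  simp only [Function.comp_apply]
  rw [Real.div_rpow hnj.le hn0.le]
  have : 0 < ((n - j : ℕ) : ℝ) ^ α := by positivity
  field_simp

theorem exists_abs_le_mul_add_one_rpow
    (hu : Tendsto (fun n : ℕ => u n / (n : ℝ) ^ α) atTop (𝓝 L)) :
    ∃ K, ∀ m : ℕ, |u m| ≤ K * ((m : ℝ) + 1) ^ α := by
  have hv : Tendsto (fun m : ℕ => |u m / ((m : ℝ) + 1) ^ α|) atTop (𝓝 |L * 1 ^ α|) := by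
    refine (hu.mul ((tendsto_natCast_div_add_atTop (1 : ℝ)).rpow_const
      (Or.inl one_ne_zero))).abs.congr' ?_
    filter_upwards [eventually_gt_atTop 0] with m hm
    have hm' : (0 : ℝ) < m := by exact_mod_cast hm
    rw [Real.div_rpow hm'.le (by positivity)]
    have : 0 < (m : ℝ) ^ α := by positivity
    field_simp
  obtain ⟨K, hK⟩ := hv.bddAbove_range
  refine ⟨K, fun m => ?_⟩
  have hm : 0 < ((m : ℝ) + 1) ^ α := by positivity
  have := hK (Set.mem_range_self m)
  rwa [abs_div, abs_of_pos hm, div_le_iff₀ hm] at this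

theorem abs_comp_sub_div_rpow_le (hK : ∀ m : ℕ, |u m| ≤ K * ((m : ℝ) + 1) ^ α) {n j : ℕ}
    (hn : 0 < n) (hj : j ≤ n) :
    |u (n - j) / (n : ℝ) ^ α| ≤ K * (2 * ((j : ℝ) + 1)) ^ |α| := by
  have hK₀ : 0 ≤ K := by simpa using (abs_nonneg _).trans (hK 0)
  have hn' : (0 : ℝ) < n := by exact_mod_cast hn
  have hn₁ : (1 : ℝ) ≤ n := by exact_mod_cast hn
  have hjn : (j : ℝ) ≤ n := by exact_mod_cast hj
  set x : ℝ := ((n - j : ℕ) + 1) / n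
  have hx : 0 < x := by positivity
  have hxM : x ≤ 2 * (j + 1) := by
    rw [div_le_iff₀ hn', Nat.cast_sub hj]
    nlinarith
  have hxM' : x⁻¹ ≤ 2 * (j + 1) := by
    rw [inv_div, div_le_iff₀ (by positivity), Nat.cast_sub hj]
    nlinarith
  calc |u (n - j) / (n : ℝ) ^ α| = |u (n - j)| / (n : ℝ) ^ α := by
        rw [abs_div, abs_of_pos (Real.rpow_pos_of_pos hn' α)]
    _ ≤ K * (((n - j : ℕ) : ℝ) + 1) ^ α / (n : ℝ) ^ α := by gcongr; exact hK _
    _ = K * x ^ α := by rw [Real.div_rpow (by positivity) hn'.le]; ring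
    _ ≤ K * (2 * ((j : ℝ) + 1)) ^ |α| := by
        gcongr
        exact rpow_le_rpow_abs_of_le_of_inv_le hx hxM hxM' α

theorem tendsto_sum_range_mul_comp_sub_div_rpow {b : ℕ → ℝ}
    (hu : Tendsto (fun n : ℕ => u n / (n : ℝ) ^ α) atTop (𝓝 L))
    (hb : Summable fun j : ℕ => |b j| * ((j : ℝ) + 1) ^ |α|) :
    Tendsto (fun n : ℕ => (∑ j ∈ range (n + 1), b j * u (n - j)) / (n : ℝ) ^ α) atTop
      (𝓝 (L * ∑' j, b j)) := by
  obtain ⟨K, hK⟩ := exists_abs_le_mul_add_one_rpow hu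
  set F : ℕ → ℕ → ℝ := fun n j => if j ≤ n then b j * (u (n - j) / (n : ℝ) ^ α) else 0
  have hF : ∀ n, ∑' j, F n j = (∑ j ∈ range (n + 1), b j * u (n - j)) / (n : ℝ) ^ α := by
    intro n
    rw [tsum_eq_sum (s := range (n + 1)) fun j hj => if_neg (by simpa using hj), sum_div]
    refine sum_congr rfl fun j hj => ?_
    rw [if_pos (mem_range_succ_iff.mp hj), mul_div_assoc]
  have hlim : ∀ j, Tendsto (F · j) atTop (𝓝 (b j * L)) := fun j =>
    ((tendsto_comp_sub_div_rpow hu j).const_mul (b j)).congr'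
      (by filter_upwards [eventually_ge_atTop j] with n hn using (if_pos hn).symm)
  have hbound : ∀ᶠ n in atTop, ∀ j, ‖F n j‖ ≤ K * 2 ^ |α| * (|b j| * ((j : ℝ) + 1) ^ |α|) := by
    filter_upwards [eventually_gt_atTop 0] with n hn j
    have hK₀ : 0 ≤ K := by simpa using (abs_nonneg _).trans (hK 0)
    by_cases hj : j ≤ n
    · simp only [F, if_pos hj, Real.norm_eq_abs, abs_mul]
      calc |b j| * |u (n - j) / (n : ℝ) ^ α| ≤ |b j| * (K * (2 * ((j : ℝ) + 1)) ^ |α|) := by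
            gcongr
            exact abs_comp_sub_div_rpow_le hK hn hj
        _ = _ := by rw [Real.mul_rpow (by norm_num) (by positivity)]; ring
    · simp only [F, if_neg hj, norm_zero]
      positivity
  have h := tendsto_tsum_of_dominated_convergence (hb.mul_left (K * 2 ^ |α|)) hlim hbound
  rw [tsum_mul_right, mul_comm] at h
  exact h.congr hF

end Convolution

theorem hasFPowerSeriesAt_ofScalars_of_hasSum {𝕜 : Type*} [NontriviallyNormedField 𝕜]
    {c : ℕ → 𝕜} {f : 𝕜 → 𝕜}
    (h : ∀ᶠ z in 𝓝 0, HasSum (fun n => c n * z ^ n) (f z)) :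
    HasFPowerSeriesAt f (FormalMultilinearSeries.ofScalars 𝕜 c) 0 := by
  obtain ⟨ε, hε, hball⟩ := Metric.eventually_nhds_iff.mp h
  have hsum : ∀ {z : 𝕜}, ‖z‖ < ε → HasSum (fun n => c n * z ^ n) (f z) := fun hz =>
    hball (by simpa using hz)
  obtain ⟨z₀, hz₀, hz₀ε⟩ := NormedField.exists_norm_lt 𝕜 hε
  refine ⟨‖z₀‖₊, ?_, by simpa using hz₀, fun {y} hy => ?_⟩
  · refine FormalMultilinearSeries.le_radius_of_tendsto _ (l := 0) ?_
    simpa [FormalMultilinearSeries.ofScalars_norm] using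
      (hsum hz₀ε).summable.tendsto_atTop_zero.norm
  · have hy' : ‖y‖ < ‖z₀‖ := by simpa [enorm_eq_nnnorm, ← NNReal.coe_lt_coe] using hy
    simpa [FormalMultilinearSeries.ofScalars_apply_eq, mul_comm] using hsum (hy'.trans hz₀ε)

theorem eq_of_hasSum_mul_pow {𝕜 : Type*} [NontriviallyNormedField 𝕜] {c d : ℕ → 𝕜} {f : 𝕜 → 𝕜}
    (hc : ∀ᶠ z in 𝓝 0, HasSum (fun n => c n * z ^ n) (f z))
    (hd : ∀ᶠ z in 𝓝 0, HasSum (fun n => d n * z ^ n) (f z)) : c = d :=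
  FormalMultilinearSeries.ofScalars_series_injective 𝕜 𝕜
    ((hasFPowerSeriesAt_ofScalars_of_hasSum hc).eq_formalMultilinearSeries
      (hasFPowerSeriesAt_ofScalars_of_hasSum hd))

section Gam

variable {r : ℝ}

theorem one_lt_sqrt_one_add_div (hr : 0 < r) : 1 < √((1 + r) / r) :=
  Real.lt_sqrt_of_sq_lt (by rw [one_pow, lt_div_iff₀ hr]; linarith)

theorem gam_pos (hr : 0 < r) : 0 < gam r := by
  have := one_lt_sqrt_one_add_div hr
  rw [gam]
  linarith

theorem four_mul_gam_mul_one_add_gam (hr : 0 < r) : 4 * r * (gam r * (1 + gam r)) = 1 := by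
  have hs : r * √((1 + r) / r) ^ 2 = 1 + r := by
    rw [Real.sq_sqrt (by positivity)]
    field_simp
  rw [gam]
  linear_combination hs

theorem mfun_eq (hr : 0 < r) : mfun r = (1 + gam r) / (1 + 2 * gam r) := by
  have hs := one_lt_sqrt_one_add_div hr
  rw [mfun, gam, ← inv_div (1 + r), Real.sqrt_inv]
  generalize √((1 + r) / r) = s at hs ⊢
  rw [show 1 + 2 * ((s - 1) / 2) = s by ring]
  have : s ≠ 0 := by positivity
  field_simp
  ring

theorem inv_mfun_eq (hr : 0 < r) : (mfun r)⁻¹ = 1 + gam r / (1 + gam r) := by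
  have := gam_pos hr
  rw [mfun_eq hr]
  field_simp
  ring

theorem one_sub_four_mul_gam_mul_eq_mul (hr : 0 < r) (w : ℝ) :
    1 - 4 * r * (gam r * w) * (1 + gam r * w) = (1 + gam r / (1 + gam r) * w) * (1 - w) := by
  have : 1 + gam r ≠ 0 := by linarith [gam_pos hr]
  field_simp
  linear_combination (-(w + gam r * w ^ 2)) * four_mul_gam_mul_one_add_gam hr

end Gam

theorem mul_gam_pow_eq_sum_negBinomCoeff {lam r δ : ℝ} {c : ℕ → ℝ} (hlam : 0 < lam) (hr : 0 < r)
    (hδ : 0 < δ) (hc : ∀ z : ℝ, |z| < δ →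
      HasSum (fun x : ℕ => c x * z ^ x) ((1 - 4 * r * z * (1 + z)) ^ (-lam))) :
    (fun x => c x * gam r ^ x) = fun x => ∑ j ∈ range (x + 1),
      negBinomCoeff lam j * (-(gam r / (1 + gam r))) ^ j * negBinomCoeff lam (x - j) := by
  set γ := gam r
  have hsmall (a : ℝ) {ε : ℝ} (hε : 0 < ε) : ∀ᶠ w : ℝ in 𝓝 0, |a * w| < ε := by
    simpa using ((continuous_const_mul a).tendsto' 0 0 (mul_zero a)).eventually
      (eventually_abs_sub_lt 0 hε)
  refine eq_of_hasSum_mul_pow (f := fun w => (1 - 4 * r * (γ * w) * (1 + γ * w)) ^ (-lam)) ?_ ?_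
  · filter_upwards [hsmall γ hδ] with w hw
    simpa only [mul_pow, mul_assoc] using hc (γ * w) hw
  · filter_upwards [hsmall 1 one_pos, hsmall (γ / (1 + γ)) one_pos] with w hw hqw
    rw [one_mul] at hw
    rw [one_sub_four_mul_gam_mul_eq_mul hr, Real.mul_rpow
      (by linarith [neg_abs_le (γ / (1 + γ) * w)]) (by linarith [le_abs_self w])]
    exact hasSum_negBinomCoeff_convolution hlam hw hqw

theorem tsum_negBinomCoeff_mul_neg_pow_gam {lam r : ℝ} (hr : 0 < r) :
    ∑' j, negBinomCoeff lam j * (-(gam r / (1 + gam r))) ^ j = mfun r ^ lam := by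
  have hγ := gam_pos hr
  have hm : 0 < mfun r := by rw [mfun]; positivity
  have hq : |-(gam r / (1 + gam r))| < 1 := by
    rw [abs_neg, abs_of_pos (by positivity), div_lt_one (by positivity)]
    linarith
  rw [(hasSum_negBinomCoeff_mul_pow lam hq).tsum_eq, sub_neg_eq_add, ← inv_mfun_eq hr,
    Real.inv_rpow hm.le, Real.rpow_neg hm.le, inv_inv]

theorem coefficient_asymptotics (lam r : ℝ) (hlam : 0 < lam) (hr : 0 < r)
    (c : ℕ → ℝ) (δ : ℝ) (hδ : 0 < δ)
    (hc : ∀ z : ℝ, |z| < δ →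
      HasSum (fun x : ℕ => c x * z ^ x) ((1 - 4 * r * z * (1 + z)) ^ (-lam))) :
    Tendsto (fun x : ℕ =>
        c x / ((mfun r ^ lam / Real.Gamma lam) * (x : ℝ) ^ (lam - 1) * gam r ^ (-(x : ℝ))))
      atTop (nhds 1) := by
  have hγ := gam_pos hr
  set q := gam r / (1 + gam r)
  have hq₀ : 0 < q := by positivity
  have hq₁ : q < 1 := by rw [div_lt_one (by positivity)]; linarith
  have hb : Summable fun j : ℕ => |negBinomCoeff lam j * (-q) ^ j| * ((j : ℝ) + 1) ^ |lam - 1| :=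
    (summable_negBinomCoeff_mul_pow_mul_rpow hlam hq₀ hq₁ _).congr fun j => by
      rw [abs_mul, abs_pow, abs_neg, abs_of_pos hq₀, abs_of_pos (negBinomCoeff_pos hlam j)]
  have hlim := (tendsto_sum_range_mul_comp_sub_div_rpow (tendsto_negBinomCoeff_div_rpow hlam)
    hb).div_const (mfun r ^ lam / Real.Gamma lam)
  have hm : 0 < mfun r ^ lam := by rw [mfun]; positivity
  have hΓ := Real.Gamma_pos_of_pos hlam
  rw [tsum_negBinomCoeff_mul_neg_pow_gam hr,
    show (Real.Gamma lam)⁻¹ * mfun r ^ lam / (mfun r ^ lam / Real.Gamma lam) = 1 by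
      field_simp] at hlim
  refine hlim.congr fun x => ?_
  rw [← congrFun (mul_gam_pow_eq_sum_negBinomCoeff hlam hr hδ hc) x, Real.rpow_neg hγ.le,
    Real.rpow_natCast]
  simp only [div_eq_mul_inv, mul_inv, inv_inv]
  ring
end
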